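/- Let s be a natural number, let v : {1,…,s+1} → ℝ and α : {1,…,s+1} × {1,…,s+1} → ℝ satisfy v_i ≥ 0, α_{ij} ≥ 0 (for j < i) and v_i + Σ_{j<i} α_{ij} = 1 for every i. Let b ≥ 0, c ≥ 0, T ≥ 0, h > 0 with h·(T + c) ≤ 1 and h·b ≤ 1, and let S⁰ ≥ 0, I⁰ ≥ 0, R⁰ ≥ 0. Define the stage values S_(i), I_(i), R_(i) by S_(i) = v_i·S⁰ + Σ_{j<i} α_{ij}·(S_(j) − h·(S_(j)·T + c·S_(j))), I_(i) = v_i·I⁰ + Σ_{j<i} α_{ij}·(I_(j) + h·(S_(j)·T − b·I_(j))), R_(i) = v_i·R⁰ + Σ_{j<i} α_{ij}·(R_(j) + h·(b·I_(j) + c·S_(j))). Then R_(i) ≥ R⁰ for every i ∈ {1,…,s+1}; in particular the next time-level value R_(s+1) satisfies R_(s+1) ≥ R⁰. -/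

import Mathlib

/-!
A Shu–Osher stage is a convex combination of the initial value and forward Euler steps
of earlier stages. Hence every convex set that contains the initial value and is
invariant under the forward Euler step contains all stages. For the SIR step with
`h (T + c) ≤ 1` and `h b ≤ 1`, the set `{S ≥ 0, I ≥ 0, R ≥ R⁰}` is such a set: the
step rescales `S` and `I` by nonnegative factors, adds the nonnegative inflow `h S T`
to `I`, and increases `R` by `h (b I + c S) ≥ 0`.
-/

open Finset

theorem Convex.smul_add_sum_smul_mem {E ι : Type*} [AddCommGroup E] [Module ℝ E]
    {K : Set E} (hK : Convex ℝ K) {t : Finset ι} {a : ℝ} {w : ι → ℝ} {x : E} {z : ι → E}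
    (ha : 0 ≤ a) (hw : ∀ j ∈ t, 0 ≤ w j) (hsum : a + ∑ j ∈ t, w j = 1)
    (hx : x ∈ K) (hz : ∀ j ∈ t, z j ∈ K) :
    a • x + ∑ j ∈ t, w j • z j ∈ K := by
  let w' : Option ι → ℝ := fun o => o.elim a w
  let z' : Option ι → E := fun o => o.elim x z
  have key := hK.sum_mem (t := insertNone t) (w := w') (z := z')
    (by rintro (_ | j) hj <;> simp_all [w'])
    (by simpa [w', sum_insertNone] using hsum)
    (by rintro (_ | j) hj <;> simp_all [z'])
  simpa [w', z', sum_insertNone] using key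

theorem shuOsher_stage_mem {E ι : Type*} [AddCommGroup E] [Module ℝ E]
    [Preorder ι] [LocallyFiniteOrderBot ι] [WellFoundedLT ι]
    {K : Set E} (hK : Convex ℝ K) {F : E → E} (hF : Set.MapsTo F K K)
    {v : ι → ℝ} {α : ι → ι → ℝ} (hv : ∀ i, 0 ≤ v i) (hα : ∀ i j, j < i → 0 ≤ α i j)
    (hcons : ∀ i, v i + ∑ j ∈ Iio i, α i j = 1)
    {y₀ : E} (hy₀ : y₀ ∈ K) {y : ι → E}
    (hy : ∀ i, y i = v i • y₀ + ∑ j ∈ Iio i, α i j • F (y j)) (i : ι) :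
    y i ∈ K := by
  induction i using WellFoundedLT.induction with
  | _ i ih =>
    rw [hy i]
    exact hK.smul_add_sum_smul_mem (hv i) (fun j hj => hα i j (mem_Iio.mp hj)) (hcons i) hy₀
      (fun j hj => hF (ih j (mem_Iio.mp hj)))

def sirEulerStep (b c T h : ℝ) (x : ℝ × ℝ × ℝ) : ℝ × ℝ × ℝ :=
  (x.1 - h * (x.1 * T + c * x.1),
    x.2.1 + h * (x.1 * T - b * x.2.1),
    x.2.2 + h * (b * x.2.1 + c * x.1))

theorem mapsTo_sirEulerStep {b c T h : ℝ} (hb : 0 ≤ b) (hc : 0 ≤ c) (hT : 0 ≤ T) (hh : 0 ≤ h)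
    (hcond1 : h * (T + c) ≤ 1) (hcond2 : h * b ≤ 1) (R₀ : ℝ) :
    Set.MapsTo (sirEulerStep b c T h)
      (Set.Ici 0 ×ˢ Set.Ici 0 ×ˢ Set.Ici R₀) (Set.Ici 0 ×ˢ Set.Ici 0 ×ˢ Set.Ici R₀) := by
  rintro ⟨S, I, R⟩ ⟨hS, hI, hR⟩
  simp only [Set.mem_Ici] at hS hI hR
  refine ⟨?_, ?_, ?_⟩ <;> simp only [sirEulerStep, Set.mem_Ici]
  · have : S - h * (S * T + c * S) = S * (1 - h * (T + c)) := by ring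
    rw [this]
    exact mul_nonneg hS (by linarith)
  · have : I + h * (S * T - b * I) = I * (1 - h * b) + h * (S * T) := by ring
    rw [this]
    exact add_nonneg (mul_nonneg hI (by linarith)) (by positivity)
  · have : 0 ≤ h * (b * I + c * S) := by positivity
    linarith

theorem stmt_15_general (s : ℕ) (v : Fin (s + 1) → ℝ) (α : Fin (s + 1) → Fin (s + 1) → ℝ)
    (hv : ∀ i, 0 ≤ v i) (hα : ∀ i j, j < i → 0 ≤ α i j)
    (hcons : ∀ i, v i + ∑ j ∈ Finset.Iio i, α i j = 1)
    (b c T h : ℝ) (hb : 0 ≤ b) (hc : 0 ≤ c) (hT : 0 ≤ T) (hh : 0 < h)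
    (hcond1 : h * (T + c) ≤ 1) (hcond2 : h * b ≤ 1)
    (S₀ I₀ R₀ : ℝ) (hS₀ : 0 ≤ S₀) (hI₀ : 0 ≤ I₀)
    (S I R : Fin (s + 1) → ℝ)
    (hS : ∀ i, S i = v i * S₀ +
      ∑ j ∈ Finset.Iio i, α i j * (S j - h * (S j * T + c * S j)))
    (hI : ∀ i, I i = v i * I₀ +
      ∑ j ∈ Finset.Iio i, α i j * (I j + h * (S j * T - b * I j)))
    (hR : ∀ i, R i = v i * R₀ +
      ∑ j ∈ Finset.Iio i, α i j * (R j + h * (b * I j + c * S j))) :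
    (∀ i, R₀ ≤ R i) ∧ R₀ ≤ R (Fin.last s) := by
  have hstage : ∀ i, (S i, I i, R i) = v i • (S₀, I₀, R₀) +
      ∑ j ∈ Iio i, α i j • sirEulerStep b c T h (S j, I j, R j) := by
    intro i
    ext <;> simp [hS i, hI i, hR i, sirEulerStep, Prod.fst_sum, Prod.snd_sum]
  have hK : Convex ℝ (Set.Ici (0 : ℝ) ×ˢ Set.Ici (0 : ℝ) ×ˢ Set.Ici R₀) :=
    (convex_Ici _).prod ((convex_Ici _).prod (convex_Ici _))
  have hmem := shuOsher_stage_mem hK (mapsTo_sirEulerStep hb hc hT hh.le hcond1 hcond2 R₀)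
    hv hα hcons (y₀ := (S₀, I₀, R₀)) ⟨hS₀, hI₀, le_refl R₀⟩ hstage
  exact ⟨fun i => (hmem i).2.2, (hmem (Fin.last s)).2.2⟩

theorem stmt_15 (s : ℕ) (v : Fin (s + 1) → ℝ) (α : Fin (s + 1) → Fin (s + 1) → ℝ)
    (hv : ∀ i, 0 ≤ v i) (hα : ∀ i j, j < i → 0 ≤ α i j)
    (hcons : ∀ i, v i + ∑ j ∈ Finset.Iio i, α i j = 1)
    (b c T h : ℝ) (hb : 0 ≤ b) (hc : 0 ≤ c) (hT : 0 ≤ T) (hh : 0 < h)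
    (hcond1 : h * (T + c) ≤ 1) (hcond2 : h * b ≤ 1)
    (S₀ I₀ R₀ : ℝ) (hS₀ : 0 ≤ S₀) (hI₀ : 0 ≤ I₀) (hR₀ : 0 ≤ R₀)
    (S I R : Fin (s + 1) → ℝ)
    (hS : ∀ i, S i = v i * S₀ +
      ∑ j ∈ Finset.Iio i, α i j * (S j - h * (S j * T + c * S j)))
    (hI : ∀ i, I i = v i * I₀ +
      ∑ j ∈ Finset.Iio i, α i j * (I j + h * (S j * T - b * I j)))
    (hR : ∀ i, R i = v i * R₀ +
      ∑ j ∈ Finset.Iio i, α i j * (R j + h * (b * I j + c * S j))) :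
    (∀ i, R₀ ≤ R i) ∧ R₀ ≤ R (Fin.last s) :=
  stmt_15_general s v α hv hα hcons b c T h hb hc hT hh hcond1 hcond2 S₀ I₀ R₀ hS₀ hI₀ S I R hS hI
    hR
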